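/- First step of the Schwinger–Dyson equation for the N-point function: for every integer M ≥ 3, all colours a₁,…,a_M ∈ {1,2,3} and all pairwise distinct indices p₁,…,p_M ∈ {0,…,N} (with p_{M+1} := p₁), the following identity holds in ℝ[[λ']]: ∂^M Z/(∂J^{a₁}_{p₁p₂} ∂J^{a₂}_{p₂p₃} ⋯ ∂J^{a_M}_{p_M p₁})|_{J=0} = −(λ'/(H_{p₁p₂} V)) Σ_{b,c=1}^{3} σ_{a₁bc} Σ_{n=0}^{N} ∂^{M+1} Z/(∂J^{a₂}_{p₂p₃} ⋯ ∂J^{a_M}_{p_M p₁} ∂J^b_{p₁n} ∂J^c_{np₂})|_{J=0}. -/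

import Mathlib

open MeasureTheory PowerSeries Finset

noncomputable section

/-- Index set for the sources `J^a_{nm}`: a colour `a ∈ {1,2,3}` and a pair of
matrix indices `n, m ∈ {0,…,N}`. -/
abbrev SrcIdx (N : ℕ) := Fin 3 × Fin (N + 1) × Fin (N + 1)

/-- The ring of (smooth-)function coefficients: functions of the sources `J`. -/
abbrev Fn (N : ℕ) := (SrcIdx N → ℝ) → ℝ

/-- `σ_{abc} = 1` if the colours `a, b, c` are pairwise distinct, `0` otherwise. -/
def sigma3 (a b c : Fin 3) : ℝ := if a ≠ b ∧ b ≠ c ∧ a ≠ c then 1 else 0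

/-- Eigenvalues of the external field: `E_m = m/V + μ²/2`. -/
def Eev (N : ℕ) (V μsq : ℝ) (m : Fin (N + 1)) : ℝ := (m : ℝ) / V + μsq / 2

/-- `H_{nm} = E_n + E_m`. -/
def Hev (N : ℕ) (V μsq : ℝ) (n m : Fin (N + 1)) : ℝ := Eev N V μsq n + Eev N V μsq m

/-- The free partition function
`Z_free[J] = exp(Σ_a Σ_{n,m} (V/(2H_{nm})) J^a_{nm} J^a_{mn})`. -/
def Zfree (N : ℕ) (V μsq : ℝ) : Fn N := fun J =>
  Real.exp (∑ a : Fin 3, ∑ n : Fin (N + 1), ∑ m : Fin (N + 1),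
    V / (2 * Hev N V μsq n m) * (J (a, n, m) * J (a, m, n)))

/-- Partial derivative `∂/∂J^a_{nm}` of a function of the sources. -/
def pd (N : ℕ) (i : SrcIdx N) (f : Fn N) : Fn N :=
  fun J => fderiv ℝ f J (Pi.single i 1)

/-- The interaction operator
`D = (1/(3V²)) Σ_{a,b,c} Σ_{n,m,l} σ_{abc} ∂³/(∂J^a_{nm} ∂J^b_{ml} ∂J^c_{ln})`. -/
def Dop (N : ℕ) (V : ℝ) (f : Fn N) : Fn N := fun J =>
  (1 / (3 * V ^ 2)) *
    ∑ a : Fin 3, ∑ b : Fin 3, ∑ c : Fin 3,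
      ∑ n : Fin (N + 1), ∑ m : Fin (N + 1), ∑ l : Fin (N + 1),
        sigma3 a b c * pd N (a, n, m) (pd N (b, m, l) (pd N (c, l, n) f)) J

/-- The partition function `Z[J] = Σ_k ((−1)^k/k!) λ'^k D^k Z_free[J]` as a formal
power series in the coupling constant `λ'` with function coefficients. -/
def Zser (N : ℕ) (V μsq : ℝ) : PowerSeries (Fn N) :=
  PowerSeries.mk fun k => fun J =>
    ((-1 : ℝ) ^ k / (Nat.factorial k : ℝ)) * (Dop N V)^[k] (Zfree N V μsq) J

/-- Partial derivative `∂/∂J^a_{nm}` acting coefficientwise on a formal power series. -/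
def Pd (N : ℕ) (i : SrcIdx N) (S : PowerSeries (Fn N)) : PowerSeries (Fn N) :=
  PowerSeries.mk fun k => pd N i (PowerSeries.coeff (R := Fn N) k S)

/-- Coefficientwise multiplication by a function of the sources (in particular by a
coordinate function or by a real constant). -/
def Cf (N : ℕ) (g : Fn N) : PowerSeries (Fn N) := PowerSeries.C (R := Fn N) g

/-- Evaluation of every coefficient at `J = 0`, giving a series in `ℝ[[λ']]`. -/
def ev0 (N : ℕ) : PowerSeries (Fn N) →+* PowerSeries ℝ :=
  PowerSeries.map (Pi.evalRingHom (fun _ : SrcIdx N → ℝ => ℝ) 0)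

end

/-!
Every coefficient of `Z` has the form `P · Z_free` with `P` a polynomial in the sources. Writing
`Z_free = exp Q`, a source derivative acts on it through the twisted derivative
`dᵢ P = ∂ᵢ P + (∂ᵢ Q) P`; these commute pairwise, `D` becomes the cubic `(1/(3V²)) Σ σ d d d`,
and the `k`-th coefficient of `Z` is `((-1)^k/k!) (D^k 1) · Z_free`.

The derivative along `J^{a₁}_{p₁p₂}` of `Z_free` produces the source `J^{a₁}_{p₂p₁}`. As the
`pᵢ` are distinct, none of the remaining derivatives acts on it, so at `J = 0` only the commutator
`[D^{k+1}, J^{a₁}_{p₂p₁}] = ((k+1)/V²) K D^k` survives, where by the cyclic symmetry of the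
vertex `K = Σ_{b,c} σ_{a₁bc} Σ_n d_{(b,p₁,n)} d_{(c,n,p₂)}`. Comparing coefficients with
`(k+1) (-1)^{k+1}/(k+1)! = -(-1)^k/k!` gives the identity.
-/

theorem pow_succ_mul_eq_of_mul_eq {A : Type*} [Semiring A] {D x t : A}
    (h : D * x = x * D + t) (ht : Commute D t) (n : ℕ) :
    D ^ (n + 1) * x = x * D ^ (n + 1) + (n + 1) • (t * D ^ n) := by
  induction n with
  | zero => simpa using h
  | succ n ih =>
    calc D ^ (n + 1 + 1) * x = D * (D ^ (n + 1) * x) := by rw [pow_succ', mul_assoc]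
      _ = (D * x) * D ^ (n + 1) + (n + 1) • (t * (D * D ^ n)) := by
        rw [ih, mul_add, mul_smul_comm, ← mul_assoc, ← mul_assoc, ← mul_assoc, ht.eq]
      _ = x * D ^ (n + 1 + 1) + (n + 1 + 1) • (t * D ^ (n + 1)) := by
        rw [h, ← pow_succ', add_mul, mul_assoc, ← pow_succ', succ_nsmul _ (n + 1)]
        abel

theorem mul_mul_mul_eq_of_mul_eq {ι A : Type*} [Semiring A] [DecidableEq ι] {d : ι → A}
    {x : A} {j : ι} (h : ∀ i, d i * x = x * d i + if i = j then 1 else 0) (i₁ i₂ i₃ : ι) :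
    d i₁ * d i₂ * d i₃ * x = x * (d i₁ * d i₂ * d i₃) +
      ((if i₁ = j then d i₂ * d i₃ else 0) + (if i₂ = j then d i₁ * d i₃ else 0) +
        (if i₃ = j then d i₁ * d i₂ else 0)) := by
  simp only [mul_assoc, h, mul_add, ← mul_assoc (d _) x, add_mul]
  split_ifs <;> simp <;> abel

namespace MvPolynomial

section TwistedPDeriv

variable {R σ : Type*} [CommSemiring R]

theorem pderiv_comm (i j : σ) (P : MvPolynomial σ R) :
    pderiv i (pderiv j P) = pderiv j (pderiv i P) := by
  classical
  induction P using MvPolynomial.induction_on with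
  | C a => simp
  | add p q hp hq => simp [hp, hq]
  | mul_X p k ih =>
    simp only [pderiv_mul, map_add, ih, pderiv_X, Pi.single_apply, apply_ite (pderiv _),
      pderiv_one, map_zero, ite_self, mul_zero]
    ring

/-- `e^{-Q} ∂ᵢ (e^{Q} P) = ∂ᵢ P + (∂ᵢ Q) P`. -/
noncomputable def twistedPDeriv (Q : MvPolynomial σ R) (i : σ) : Module.End R (MvPolynomial σ R) :=
  (pderiv i : Derivation R (MvPolynomial σ R) (MvPolynomial σ R)).toLinearMap +
    LinearMap.mulLeft R (pderiv i Q)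

variable (Q : MvPolynomial σ R)

@[simp]
theorem twistedPDeriv_apply (i : σ) (P : MvPolynomial σ R) :
    twistedPDeriv Q i P = pderiv i P + pderiv i Q * P := rfl

theorem commute_twistedPDeriv (i j : σ) :
    Commute (twistedPDeriv Q i) (twistedPDeriv Q j) := by
  refine LinearMap.ext fun P => ?_
  simp only [Module.End.mul_apply, twistedPDeriv_apply, map_add, pderiv_mul, pderiv_comm i j]
  ring

theorem twistedPDeriv_mul_mulLeft_X [DecidableEq σ] (i j : σ) :
    twistedPDeriv Q i * LinearMap.mulLeft R (X j)
      = LinearMap.mulLeft R (X j) * twistedPDeriv Q i + if i = j then 1 else 0 := by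
  refine LinearMap.ext fun P => ?_
  by_cases h : i = j
  · subst h; simp; ring
  · simp [pderiv_X_of_ne (Ne.symm h), h]; ring

end TwistedPDeriv

variable {σ : Type*} [Fintype σ]

theorem hasFDerivAt_eval (P : MvPolynomial σ ℝ) (x : σ → ℝ) :
    HasFDerivAt (fun x => eval x P)
      (∑ k, eval x (pderiv k P) • ContinuousLinearMap.proj (R := ℝ) (φ := fun _ => ℝ) k)
      x := by
  classical
  induction P using MvPolynomial.induction_on with
  | C a => simpa using hasFDerivAt_const a x
  | add p q hp hq => simpa [add_smul, Finset.sum_add_distrib] using hp.fun_add hq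
  | mul_X p j ih =>
    simp only [map_mul, eval_X]
    refine (ih.fun_mul (hasFDerivAt_apply j x)).congr_fderiv
      (ContinuousLinearMap.ext fun v => ?_)
    simp [Pi.single_apply, add_mul, Finset.sum_add_distrib, Finset.mul_sum, apply_ite (eval x),
      mul_assoc]

theorem fderiv_eval_mul_exp_eval_single [DecidableEq σ] (P Q : MvPolynomial σ ℝ)
    (x : σ → ℝ) (i : σ) :
    fderiv ℝ (fun x => eval x P * Real.exp (eval x Q)) x (Pi.single i 1)
      = eval x (twistedPDeriv Q i P) * Real.exp (eval x Q) := by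
  rw [((hasFDerivAt_eval P x).fun_mul (hasFDerivAt_eval Q x).exp).fderiv]
  simp [Pi.single_apply]
  ring

end MvPolynomial

theorem sigma3_rotate (a b c : Fin 3) : sigma3 a b c = sigma3 b c a := by
  unfold sigma3
  split_ifs <;> tauto

section CubicForm

variable {N : ℕ} {A : Type*} [Semiring A] [Algebra ℝ A]

def cubicForm (d : SrcIdx N → A) : A :=
  ∑ a : Fin 3, ∑ b : Fin 3, ∑ c : Fin 3,
    ∑ n : Fin (N + 1), ∑ m : Fin (N + 1), ∑ l : Fin (N + 1),
      sigma3 a b c • (d (a, n, m) * d (b, m, l) * d (c, l, n))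

def schwingerDysonKernel (d : SrcIdx N → A) (a₁ : Fin 3) (p₁ p₂ : Fin (N + 1)) : A :=
  ∑ b : Fin 3, ∑ c : Fin 3,
    sigma3 a₁ b c • ∑ n : Fin (N + 1), d (b, p₁, n) * d (c, n, p₂)

variable {d : SrcIdx N → A}

theorem commute_cubicForm (hd : ∀ i j, Commute (d i) (d j)) (i : SrcIdx N) :
    Commute (d i) (cubicForm d) := by
  unfold cubicForm
  iterate 6 refine Commute.sum_right _ _ _ fun _ _ => ?_
  exact (((hd _ _).mul_right (hd _ _)).mul_right (hd _ _)).smul_right _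

theorem commute_cubicForm_schwingerDysonKernel (hd : ∀ i j, Commute (d i) (d j)) (a₁ : Fin 3)
    (p₁ p₂ : Fin (N + 1)) :
    Commute (cubicForm d) (schwingerDysonKernel d a₁ p₁ p₂) := by
  unfold schwingerDysonKernel
  iterate 2 refine Commute.sum_right _ _ _ fun _ _ => ?_
  refine (Commute.sum_right _ _ _ fun _ _ => ?_).smul_right _
  exact (commute_cubicForm hd _).symm.mul_right (commute_cubicForm hd _).symm

theorem cubicForm_mul_eq (hd : ∀ i j, Commute (d i) (d j)) {x : A} {a₁ : Fin 3}
    {p₁ p₂ : Fin (N + 1)}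
    (hx : ∀ i, d i * x = x * d i + if i = (a₁, p₂, p₁) then 1 else 0) :
    cubicForm d * x = x * cubicForm d + 3 • schwingerDysonKernel d a₁ p₁ p₂ := by
  simp only [cubicForm, Finset.sum_mul, Finset.mul_sum, smul_mul_assoc, mul_smul_comm,
    mul_mul_mul_eq_of_mul_eq hx, smul_add, Finset.sum_add_distrib, Prod.mk.injEq, ite_and,
    smul_ite, smul_zero, Finset.sum_ite_irrel, Finset.sum_const_zero, Finset.sum_ite_eq',
    Finset.mem_univ, if_true]
  congr 1
  -- the three commutator terms agree by the cyclic symmetry of `σ` and of the index loop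
  have h₁ (b c : Fin 3) : sigma3 b c a₁ = sigma3 a₁ b c := (sigma3_rotate a₁ b c).symm
  have h₂ (c b : Fin 3) (n : Fin (N + 1)) :
      sigma3 c a₁ b • (d (c, n, p₂) * d (b, p₁, n))
        = sigma3 a₁ b c • (d (b, p₁, n) * d (c, n, p₂)) := by
    rw [sigma3_rotate, sigma3_rotate, (hd _ _).eq]
  rw [show 3 • schwingerDysonKernel d a₁ p₁ p₂ = schwingerDysonKernel d a₁ p₁ p₂ +
    schwingerDysonKernel d a₁ p₁ p₂ + schwingerDysonKernel d a₁ p₁ p₂ by abel]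
  simp only [h₁, h₂, schwingerDysonKernel, Finset.smul_sum]
  rw [Finset.sum_comm
    (f := fun c b => ∑ n, sigma3 a₁ b c • (d (b, p₁, n) * d (c, n, p₂)))]

end CubicForm

section FreeTheory

open MvPolynomial

variable (N : ℕ) (V μsq : ℝ)

noncomputable def freeQuadForm : MvPolynomial (SrcIdx N) ℝ :=
  ∑ a : Fin 3, ∑ n : Fin (N + 1), ∑ m : Fin (N + 1),
    MvPolynomial.C (V / (2 * Hev N V μsq n m)) *
      (MvPolynomial.X (a, n, m) * MvPolynomial.X (a, m, n))

noncomputable abbrev srcDeriv : SrcIdx N → Module.End ℝ (MvPolynomial (SrcIdx N) ℝ) :=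
  twistedPDeriv (freeQuadForm N V μsq)

noncomputable def interactionOp : Module.End ℝ (MvPolynomial (SrcIdx N) ℝ) :=
  (1 / (3 * V ^ 2)) • cubicForm (srcDeriv N V μsq)

noncomputable def polyMulZfree (P : MvPolynomial (SrcIdx N) ℝ) : Fn N :=
  fun J => eval J P * Zfree N V μsq J

variable {N V μsq}

theorem Zfree_eq_exp_eval :
    Zfree N V μsq = fun J => Real.exp (eval J (freeQuadForm N V μsq)) := by
  funext J
  simp [Zfree, freeQuadForm]

theorem Hev_comm (n m : Fin (N + 1)) : Hev N V μsq n m = Hev N V μsq m n :=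
  add_comm _ _

theorem pderiv_freeQuadForm (a : Fin 3) (n m : Fin (N + 1)) :
    pderiv (a, n, m) (freeQuadForm N V μsq)
      = MvPolynomial.C (V / Hev N V μsq n m) * MvPolynomial.X (a, m, n) := by
  classical
  simp [freeQuadForm, pderiv_X, Pi.single_apply, ite_and, mul_add, Finset.sum_add_distrib,
    Finset.sum_ite_eq', Finset.sum_ite_irrel]
  rw [Hev_comm m n, ← add_mul, ← map_add]
  congr 2
  ring

theorem srcDeriv_one (a : Fin 3) (n m : Fin (N + 1)) :
    srcDeriv N V μsq (a, n, m) 1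
      = MvPolynomial.C (V / Hev N V μsq n m) * MvPolynomial.X (a, m, n) := by
  simp [pderiv_freeQuadForm]

theorem pd_polyMulZfree (i : SrcIdx N) (P : MvPolynomial (SrcIdx N) ℝ) :
    pd N i (polyMulZfree N V μsq P) = polyMulZfree N V μsq (srcDeriv N V μsq i P) := by
  funext J
  unfold pd polyMulZfree
  rw [Zfree_eq_exp_eval]
  exact fderiv_eval_mul_exp_eval_single P _ J i

theorem Dop_polyMulZfree (P : MvPolynomial (SrcIdx N) ℝ) :
    Dop N V (polyMulZfree N V μsq P) = polyMulZfree N V μsq (interactionOp N V μsq P) := by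
  funext J
  simp only [Dop, pd_polyMulZfree, interactionOp, cubicForm, polyMulZfree, LinearMap.smul_apply,
    LinearMap.sum_apply, smul_eval, map_sum, Module.End.mul_apply, Finset.sum_mul, mul_assoc]

theorem Dop_iterate_Zfree (k : ℕ) :
    (Dop N V)^[k] (Zfree N V μsq) = polyMulZfree N V μsq ((interactionOp N V μsq ^ k) 1) := by
  induction k with
  | zero => funext J; simp [polyMulZfree]
  | succ k ih =>
    rw [Function.iterate_succ_apply', ih, Dop_polyMulZfree, pow_succ', Module.End.mul_apply]

theorem foldr_pd_polyMulZfree (l : List (SrcIdx N)) (P : MvPolynomial (SrcIdx N) ℝ) :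
    l.foldr (pd N) (polyMulZfree N V μsq P)
      = polyMulZfree N V μsq ((l.map (srcDeriv N V μsq)).prod P) := by
  induction l with
  | nil => rfl
  | cons i l ih => simp [ih, pd_polyMulZfree]

theorem coeff_foldr_Pd (l : List (SrcIdx N)) (S : PowerSeries (Fn N)) (k : ℕ) :
    PowerSeries.coeff k (l.foldr (Pd N) S) = l.foldr (pd N) (PowerSeries.coeff k S) := by
  induction l with
  | nil => rfl
  | cons i l ih => simp [Pd, ih]

theorem coeff_Zser (k : ℕ) :
    PowerSeries.coeff k (Zser N V μsq)
      = polyMulZfree N V μsq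
          (((-1) ^ k / k.factorial : ℝ) • (interactionOp N V μsq ^ k) 1) := by
  funext J
  simp [Zser, Dop_iterate_Zfree, polyMulZfree, smul_eval, mul_assoc]

theorem polyMulZfree_zero (P : MvPolynomial (SrcIdx N) ℝ) :
    polyMulZfree N V μsq P 0 = eval 0 P := by
  simp [polyMulZfree, Zfree]

theorem coeff_ev0_foldr_Pd_Zser (l : List (SrcIdx N)) (k : ℕ) :
    PowerSeries.coeff k (ev0 N (l.foldr (Pd N) (Zser N V μsq)))
      = (-1) ^ k / k.factorial *
          eval 0 (((l.map (srcDeriv N V μsq)).prod * interactionOp N V μsq ^ k) 1) := by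
  rw [ev0, PowerSeries.coeff_map, coeff_foldr_Pd, coeff_Zser, foldr_pd_polyMulZfree]
  simp [polyMulZfree_zero]

end FreeTheory

section SchwingerDyson

open MvPolynomial

variable {N : ℕ} {V μsq : ℝ}

theorem commute_srcDeriv (i j : SrcIdx N) :
    Commute (srcDeriv N V μsq i) (srcDeriv N V μsq j) :=
  commute_twistedPDeriv _ i j

theorem commute_srcDeriv_interactionOp (i : SrcIdx N) :
    Commute (srcDeriv N V μsq i) (interactionOp N V μsq) :=
  (commute_cubicForm commute_srcDeriv i).smul_right _

theorem interactionOp_mul_mulLeft_X (a₁ : Fin 3) (p₁ p₂ : Fin (N + 1)) :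
    interactionOp N V μsq * LinearMap.mulLeft ℝ (MvPolynomial.X (a₁, p₂, p₁))
      = LinearMap.mulLeft ℝ (MvPolynomial.X (a₁, p₂, p₁)) * interactionOp N V μsq
        + (1 / V ^ 2) • schwingerDysonKernel (srcDeriv N V μsq) a₁ p₁ p₂ := by
  classical
  rw [interactionOp, smul_mul_assoc,
    cubicForm_mul_eq commute_srcDeriv (twistedPDeriv_mul_mulLeft_X _ · _), mul_smul_comm,
    smul_add, ← Nat.cast_smul_eq_nsmul ℝ, smul_smul]
  congr 2
  ring

theorem commute_prod_srcDeriv_mulLeft_X {l : List (SrcIdx N)} {j : SrcIdx N} (hj : j ∉ l) :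
    Commute (l.map (srcDeriv N V μsq)).prod (LinearMap.mulLeft ℝ (MvPolynomial.X j)) := by
  classical
  refine Commute.list_prod_left _ _ fun d hd => ?_
  obtain ⟨i, hi, rfl⟩ := List.mem_map.1 hd
  have h := twistedPDeriv_mul_mulLeft_X (freeQuadForm N V μsq) i j
  rwa [if_neg (ne_of_mem_of_not_mem hi hj), add_zero] at h

theorem eval_zero_prod_srcDeriv_X_mul {l : List (SrcIdx N)} {j : SrcIdx N} (hj : j ∉ l)
    (P : MvPolynomial (SrcIdx N) ℝ) :
    eval 0 ((l.map (srcDeriv N V μsq)).prod (MvPolynomial.X j * P)) = 0 := by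
  have h := LinearMap.congr_fun (commute_prod_srcDeriv_mulLeft_X (V := V) (μsq := μsq) hj).eq P
  simp only [Module.End.mul_apply, LinearMap.mulLeft_apply] at h
  simp [h]

theorem commute_srcDeriv_prod (i : SrcIdx N) (l : List (SrcIdx N)) :
    Commute (srcDeriv N V μsq i) (l.map (srcDeriv N V μsq)).prod :=
  Commute.list_prod_right _ _ fun d hd => by
    obtain ⟨j, -, rfl⟩ := List.mem_map.1 hd
    exact commute_srcDeriv i j

theorem eval_zero_srcDeriv_mul_prod_one {a₁ : Fin 3} {p₁ p₂ : Fin (N + 1)}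
    {rest : List (SrcIdx N)} (hj : (a₁, p₂, p₁) ∉ rest) :
    eval 0
      ((srcDeriv N V μsq (a₁, p₁, p₂) * (rest.map (srcDeriv N V μsq)).prod) 1) = 0 := by
  rw [(commute_srcDeriv_prod _ _).eq, Module.End.mul_apply, srcDeriv_one, mul_comm]
  exact eval_zero_prod_srcDeriv_X_mul hj _

theorem eval_zero_srcDeriv_mul_prod_interactionOp_pow_succ {a₁ : Fin 3} {p₁ p₂ : Fin (N + 1)}
    {rest : List (SrcIdx N)} (hj : (a₁, p₂, p₁) ∉ rest) (k : ℕ) :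
    eval 0 ((srcDeriv N V μsq (a₁, p₁, p₂) * (rest.map (srcDeriv N V μsq)).prod *
        interactionOp N V μsq ^ (k + 1)) 1)
      = V / Hev N V μsq p₁ p₂ * ((k + 1) * (1 / V ^ 2)) * eval 0
          (((rest.map (srcDeriv N V μsq)).prod *
            schwingerDysonKernel (srcDeriv N V μsq) a₁ p₁ p₂ * interactionOp N V μsq ^ k) 1) := by
  have hD := pow_succ_mul_eq_of_mul_eq
    (interactionOp_mul_mulLeft_X (V := V) (μsq := μsq) a₁ p₁ p₂)
    (((commute_cubicForm_schwingerDysonKernel commute_srcDeriv a₁ p₁ p₂).smul_left _).smul_right _)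
    k
  have hd1 : srcDeriv N V μsq (a₁, p₁, p₂) 1
      = (V / Hev N V μsq p₁ p₂) • LinearMap.mulLeft ℝ (MvPolynomial.X (a₁, p₂, p₁)) 1 := by
    rw [srcDeriv_one, LinearMap.mulLeft_apply, mul_one, MvPolynomial.smul_eq_C_mul]
  rw [(commute_srcDeriv_prod _ _).eq, mul_assoc,
    ((commute_srcDeriv_interactionOp _).pow_right _).eq, ← mul_assoc, Module.End.mul_apply, hd1,
    map_smul, ← Module.End.mul_apply, mul_assoc, hD, ← Nat.cast_smul_eq_nsmul ℝ]
  simp only [mul_add, LinearMap.add_apply, mul_smul_comm, smul_mul_assoc, LinearMap.smul_apply,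
    Module.End.mul_apply, LinearMap.mulLeft_apply, map_add, smul_eval,
    eval_zero_prod_srcDeriv_X_mul hj, zero_add, Nat.cast_add, Nat.cast_one, mul_assoc]

theorem ev0_foldr_Pd_Zser_cons (hV : V ≠ 0) {a₁ : Fin 3} {p₁ p₂ : Fin (N + 1)}
    {rest : List (SrcIdx N)} (hj : (a₁, p₂, p₁) ∉ rest) :
    ev0 N (List.foldr (Pd N) (Zser N V μsq) ((a₁, p₁, p₂) :: rest))
      = -(PowerSeries.X * PowerSeries.C (1 / (Hev N V μsq p₁ p₂ * V)) *
          ∑ b : Fin 3, ∑ c : Fin 3, PowerSeries.C (sigma3 a₁ b c) *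
            ∑ n : Fin (N + 1),
              ev0 N (List.foldr (Pd N) (Zser N V μsq) (rest ++ [(b, p₁, n), (c, n, p₂)]))) := by
  ext k
  rw [mul_assoc, map_neg]
  rcases k with _ | k
  · rw [PowerSeries.coeff_zero_X_mul, coeff_ev0_foldr_Pd_Zser, List.map_cons, List.prod_cons,
      pow_zero, pow_zero, mul_one, eval_zero_srcDeriv_mul_prod_one hj, mul_zero, neg_zero]
  · rw [PowerSeries.coeff_succ_X_mul, coeff_ev0_foldr_Pd_Zser, List.map_cons, List.prod_cons,
      eval_zero_srcDeriv_mul_prod_interactionOp_pow_succ hj]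
    simp only [PowerSeries.coeff_C_mul, map_sum, coeff_ev0_foldr_Pd_Zser, List.map_append,
      List.prod_append, List.map_cons, List.map_nil, List.prod_cons, List.prod_nil, mul_one,
      schwingerDysonKernel, mul_smul_comm, smul_mul_assoc, Finset.mul_sum, Finset.sum_mul,
      LinearMap.sum_apply, LinearMap.smul_apply, smul_eval, mul_assoc, ← Finset.sum_neg_distrib]
    have hs : (-1) ^ (k + 1) / ((k + 1).factorial : ℝ) *
          (V / Hev N V μsq p₁ p₂ * ((k + 1) * (1 / V ^ 2)))
        = -(1 / (Hev N V μsq p₁ p₂ * V) * ((-1) ^ k / k.factorial)) := by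
      rw [Nat.factorial_succ, Nat.cast_mul]
      field_simp
      push_cast
      ring
    refine Finset.sum_congr rfl fun b _ => Finset.sum_congr rfl fun c _ =>
      Finset.sum_congr rfl fun n _ => ?_
    generalize eval (0 : SrcIdx N → ℝ) _ = E
    linear_combination sigma3 a₁ b c * E * hs

end SchwingerDyson

theorem reverse_first_link_notMem_ofFn_succ {N m : ℕ} (aa : Fin (m + 3) → Fin 3)
    {p : Fin (m + 3) → Fin (N + 1)} (hinj : Function.Injective p) :
    ((aa ⟨0, by omega⟩, p ⟨1, by omega⟩, p ⟨0, by omega⟩) : SrcIdx N) ∉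
      List.ofFn fun i : Fin (m + 2) =>
        ((aa i.succ, p i.succ, p ⟨(i.succ.val + 1) % (m + 3), Nat.mod_lt _ (by omega)⟩) :
          SrcIdx N) := by
  rw [List.mem_ofFn]
  rintro ⟨i, hi⟩
  simp only [Prod.mk.injEq] at hi
  have h₁ := congrArg Fin.val (hinj hi.2.1)
  have h₂ := congrArg Fin.val (hinj hi.2.2)
  simp only [Fin.val_succ] at h₁ h₂
  rw [show (i : ℕ) = 0 by omega, Nat.mod_eq_of_lt (by omega)] at h₂
  omega

/-- First step of the Schwinger–Dyson equation for the `M`-point function: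
for `M ≥ 3`, colours `a₁,…,a_M` and pairwise distinct indices `p₁,…,p_M` (cyclically,
`p_{M+1} = p₁`), the evaluated `M`-th derivative of `Z` at `J = 0` equals
`−(λ'/(H_{p₁p₂}V)) Σ_{b,c} σ_{a₁bc} Σ_n` of the evaluated `(M+1)`-st derivative, in `ℝ[[λ']]`. -/
theorem schwinger_dyson_N_point_first_step (N : ℕ) (V μsq : ℝ) (hV : 0 < V)
    (M : ℕ) (hM : 3 ≤ M) (aa : Fin M → Fin 3) (p : Fin M → Fin (N + 1))
    (hinj : Function.Injective p) :
    ev0 N (List.foldr (Pd N) (Zser N V μsq)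
        (List.ofFn fun i : Fin M =>
          ((aa i, p i, p ⟨(i.val + 1) % M, Nat.mod_lt _ (by omega)⟩) : SrcIdx N)))
      = -(PowerSeries.X *
          PowerSeries.C (R := ℝ)
            (1 / (Hev N V μsq (p ⟨0, by omega⟩) (p ⟨1, by omega⟩) * V)) *
          ∑ b : Fin 3, ∑ c : Fin 3,
            PowerSeries.C (R := ℝ) (sigma3 (aa ⟨0, by omega⟩) b c) *
              ∑ n : Fin (N + 1),
                ev0 N (List.foldr (Pd N) (Zser N V μsq)
                  ((List.ofFn fun i : Fin M =>
                      ((aa i, p i, p ⟨(i.val + 1) % M, Nat.mod_lt _ (by omega)⟩) : SrcIdx N)).tail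
                    ++ [(b, p ⟨0, by omega⟩, n), (c, n, p ⟨1, by omega⟩)]))) := by
  obtain ⟨m, rfl⟩ : ∃ m, M = m + 3 := ⟨M - 3, by omega⟩
  rw [List.ofFn_succ, List.tail_cons]
  exact ev0_foldr_Pd_Zser_cons hV.ne' (reverse_first_link_notMem_ofFn_succ aa hinj)
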